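/- Let M be a right comodule over a Hopf algebroid (H_L, H_R, S) with bijective antipode. Then the H_R-coinvariants and H_L-coinvariants of M coincide: {m ∈ M | ρ_R(m) = m ⊗_R 1} = {m ∈ M | ρ_L(m) = m ⊗_L 1}. -/
import Mathlib


open TensorProduct LinearMap

noncomputable section

/-- A Hopf algebroid over the commutative base ring `k` (equivalently, a coupled Hopf
algebra): a `k`-algebra `H` with a left coproduct `ΔL` (counit `εL`), a right coproduct
`ΔR` (counit `εR`) and a bijective antipode `S` coupling them. -/
structure HopfAlgebroidOver (k H : Type*) [CommRing k] [Ring H] [Algebra k H] where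
  ΔL : H →ₗ[k] H ⊗[k] H
  ΔR : H →ₗ[k] H ⊗[k] H
  εL : H →ₗ[k] k
  εR : H →ₗ[k] k
  S : H →ₗ[k] H
  S_bij : Function.Bijective S
  ΔL_mul : ∀ a b : H, ΔL (a * b) = ΔL a * ΔL b
  ΔR_mul : ∀ a b : H, ΔR (a * b) = ΔR a * ΔR b
  ΔL_one : ΔL 1 = 1
  ΔR_one : ΔR 1 = 1
  coassocL : (TensorProduct.assoc k H H H).toLinearMap ∘ₗ LinearMap.rTensor H ΔL ∘ₗ ΔL =
    LinearMap.lTensor H ΔL ∘ₗ ΔL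
  coassocR : (TensorProduct.assoc k H H H).toLinearMap ∘ₗ LinearMap.rTensor H ΔR ∘ₗ ΔR =
    LinearMap.lTensor H ΔR ∘ₗ ΔR
  counitL_l : (TensorProduct.lid k H).toLinearMap ∘ₗ LinearMap.rTensor H εL ∘ₗ ΔL =
    LinearMap.id
  counitL_r : (TensorProduct.rid k H).toLinearMap ∘ₗ LinearMap.lTensor H εL ∘ₗ ΔL =
    LinearMap.id
  counitR_l : (TensorProduct.lid k H).toLinearMap ∘ₗ LinearMap.rTensor H εR ∘ₗ ΔR =
    LinearMap.id
  counitR_r : (TensorProduct.rid k H).toLinearMap ∘ₗ LinearMap.lTensor H εR ∘ₗ ΔR =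
    LinearMap.id
  /-- the two coproducts commute -/
  comul_comm₁ : (TensorProduct.assoc k H H H).toLinearMap ∘ₗ
      LinearMap.rTensor H ΔL ∘ₗ ΔR = LinearMap.lTensor H ΔR ∘ₗ ΔL
  comul_comm₂ : (TensorProduct.assoc k H H H).toLinearMap ∘ₗ
      LinearMap.rTensor H ΔR ∘ₗ ΔL = LinearMap.lTensor H ΔL ∘ₗ ΔR
  /-- antipode axiom: `μ ∘ (S ⊗ id) ∘ ΔL = η ∘ εR` -/
  antipode_left : LinearMap.mul' k H ∘ₗ LinearMap.rTensor H S ∘ₗ ΔL =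
    (Algebra.linearMap k H) ∘ₗ εR
  /-- antipode axiom: `μ ∘ (id ⊗ S) ∘ ΔR = η ∘ εL` -/
  antipode_right : LinearMap.mul' k H ∘ₗ LinearMap.lTensor H S ∘ₗ ΔR =
    (Algebra.linearMap k H) ∘ₗ εL

variable {k H : Type*} [CommRing k] [Ring H] [Algebra k H]

/-- A right comodule over a Hopf algebroid: a `k`-module `M` with an `H_R`-coaction `ρR`
and an `H_L`-coaction `ρL` such that each coaction is a comodule map for the other. -/
structure RightComodule (A : HopfAlgebroidOver k H) (M : Type*)
    [AddCommGroup M] [Module k M] where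
  ρL : M →ₗ[k] M ⊗[k] H
  ρR : M →ₗ[k] M ⊗[k] H
  coassocL : (TensorProduct.assoc k M H H).toLinearMap ∘ₗ LinearMap.rTensor H ρL ∘ₗ ρL =
    LinearMap.lTensor M A.ΔL ∘ₗ ρL
  coassocR : (TensorProduct.assoc k M H H).toLinearMap ∘ₗ LinearMap.rTensor H ρR ∘ₗ ρR =
    LinearMap.lTensor M A.ΔR ∘ₗ ρR
  counitL : (TensorProduct.rid k M).toLinearMap ∘ₗ LinearMap.lTensor M A.εL ∘ₗ ρL =
    LinearMap.id
  counitR : (TensorProduct.rid k M).toLinearMap ∘ₗ LinearMap.lTensor M A.εR ∘ₗ ρR =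
    LinearMap.id
  /-- `ρR` is an `H_L`-comodule map: `(ρ_R ⊗ id) ∘ ρ_L = (id ⊗ Δ_L) ∘ ρ_R` -/
  mixed₁ : (TensorProduct.assoc k M H H).toLinearMap ∘ₗ LinearMap.rTensor H ρR ∘ₗ ρL =
    LinearMap.lTensor M A.ΔL ∘ₗ ρR
  /-- `ρL` is an `H_R`-comodule map: `(ρ_L ⊗ id) ∘ ρ_R = (id ⊗ Δ_R) ∘ ρ_L` -/
  mixed₂ : (TensorProduct.assoc k M H H).toLinearMap ∘ₗ LinearMap.rTensor H ρL ∘ₗ ρR =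
    LinearMap.lTensor M A.ΔR ∘ₗ ρL


section Aux

variable {k H : Type*} [CommRing k] [Ring H] [Algebra k H]
variable {M : Type*} [AddCommGroup M] [Module k M]

private lemma key1 (S : H →ₗ[k] H) (hS : S 1 = 1) (x : M ⊗[k] H) :
    lTensor M (mul' k H ∘ₗ lTensor H S) ((TensorProduct.assoc k M H H) (x ⊗ₜ (1 : H))) = x := by
  induction x using TensorProduct.induction_on with
  | zero => simp
  | tmul m h => simp [hS, mul'_apply]
  | add x y hx hy => simp [TensorProduct.add_tmul, hx, hy]

private lemma key2 (S : H →ₗ[k] H) (x : M ⊗[k] H) :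
    lTensor M (mul' k H ∘ₗ rTensor H S) ((TensorProduct.assoc k M H H) (x ⊗ₜ (1 : H))) =
      lTensor M S x := by
  induction x using TensorProduct.induction_on with
  | zero => simp
  | tmul m h => simp [mul'_apply]
  | add x y hx hy => simp [TensorProduct.add_tmul, hx, hy]

private lemma key3 (ε : H →ₗ[k] k) (x : M ⊗[k] H) :
    lTensor M ((Algebra.linearMap k H) ∘ₗ ε) x =
      ((TensorProduct.rid k M) (lTensor M ε x)) ⊗ₜ (1 : H) := by
  induction x using TensorProduct.induction_on with
  | zero => simp
  | tmul m h =>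
      simp only [lTensor_tmul, LinearMap.comp_apply, Algebra.linearMap_apply,
        TensorProduct.rid_tmul, Algebra.algebraMap_eq_smul_one, TensorProduct.tmul_smul,
        TensorProduct.smul_tmul']
  | add x y hx hy => simp [TensorProduct.add_tmul, hx, hy]

private lemma S_one (A : HopfAlgebroidOver k H) : A.S 1 = 1 := by
  have h1 : algebraMap k H (A.εR 1) = 1 := by
    have h := LinearMap.congr_fun A.counitR_l 1
    rw [LinearMap.comp_apply, LinearMap.comp_apply, A.ΔR_one,
      Algebra.TensorProduct.one_def, rTensor_tmul] at h
    simp only [LinearEquiv.coe_coe, TensorProduct.lid_tmul, LinearMap.id_apply] at h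
    rw [Algebra.algebraMap_eq_smul_one]
    exact h
  have h2 := LinearMap.congr_fun A.antipode_left 1
  rw [LinearMap.comp_apply, LinearMap.comp_apply, A.ΔL_one,
    Algebra.TensorProduct.one_def, rTensor_tmul, LinearMap.comp_apply,
    Algebra.linearMap_apply, h1] at h2
  simpa [mul'_apply] using h2

end Aux

/-- For a right comodule `M` over a Hopf algebroid with bijective antipode, the
`H_R`-coinvariants and the `H_L`-coinvariants of `M` coincide. -/
theorem stmt8 (A : HopfAlgebroidOver k H) (M : Type*) [AddCommGroup M] [Module k M]
    (C : RightComodule A M) :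
    {m : M | C.ρR m = m ⊗ₜ (1 : H)} = {m : M | C.ρL m = m ⊗ₜ (1 : H)} := by
  have hS1 := S_one A
  ext m
  simp only [Set.mem_setOf_eq]
  have hcL : (TensorProduct.rid k M) (lTensor M A.εL (C.ρL m)) = m := by
    have := LinearMap.congr_fun C.counitL m
    simpa [LinearMap.comp_apply] using this
  have hcR : (TensorProduct.rid k M) (lTensor M A.εR (C.ρR m)) = m := by
    have := LinearMap.congr_fun C.counitR m
    simpa [LinearMap.comp_apply] using this
  have hm2 : (TensorProduct.assoc k M H H) (rTensor H C.ρL (C.ρR m)) =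
      lTensor M A.ΔR (C.ρL m) := by
    have := LinearMap.congr_fun C.mixed₂ m
    simpa [LinearMap.comp_apply] using this
  have hm1 : (TensorProduct.assoc k M H H) (rTensor H C.ρR (C.ρL m)) =
      lTensor M A.ΔL (C.ρR m) := by
    have := LinearMap.congr_fun C.mixed₁ m
    simpa [LinearMap.comp_apply] using this
  constructor
  · intro hR
    calc C.ρL m
        = lTensor M (mul' k H ∘ₗ lTensor H A.S)
            ((TensorProduct.assoc k M H H) ((C.ρL m) ⊗ₜ (1 : H))) := (key1 A.S hS1 _).symm
      _ = lTensor M (mul' k H ∘ₗ lTensor H A.S)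
            ((TensorProduct.assoc k M H H) (rTensor H C.ρL (C.ρR m))) := by
            rw [hR, rTensor_tmul]
      _ = lTensor M (mul' k H ∘ₗ lTensor H A.S) (lTensor M A.ΔR (C.ρL m)) := by rw [hm2]
      _ = lTensor M ((mul' k H ∘ₗ lTensor H A.S) ∘ₗ A.ΔR) (C.ρL m) := by
            simp [lTensor_comp]
      _ = lTensor M ((Algebra.linearMap k H) ∘ₗ A.εL) (C.ρL m) := by
            rw [LinearMap.comp_assoc, A.antipode_right]
      _ = ((TensorProduct.rid k M) (lTensor M A.εL (C.ρL m))) ⊗ₜ (1 : H) := key3 A.εL _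
      _ = m ⊗ₜ (1 : H) := by rw [hcL]
  · intro hL
    have hmain : lTensor M A.S (C.ρR m) = lTensor M A.S (m ⊗ₜ (1 : H)) := by
      calc lTensor M A.S (C.ρR m)
          = lTensor M (mul' k H ∘ₗ rTensor H A.S)
              ((TensorProduct.assoc k M H H) ((C.ρR m) ⊗ₜ (1 : H))) := (key2 A.S _).symm
        _ = lTensor M (mul' k H ∘ₗ rTensor H A.S)
              ((TensorProduct.assoc k M H H) (rTensor H C.ρR (C.ρL m))) := by
              rw [hL, rTensor_tmul]
        _ = lTensor M (mul' k H ∘ₗ rTensor H A.S) (lTensor M A.ΔL (C.ρR m)) := by rw [hm1]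
        _ = lTensor M ((mul' k H ∘ₗ rTensor H A.S) ∘ₗ A.ΔL) (C.ρR m) := by
              simp [lTensor_comp]
        _ = lTensor M ((Algebra.linearMap k H) ∘ₗ A.εR) (C.ρR m) := by
              rw [LinearMap.comp_assoc, A.antipode_left]
        _ = ((TensorProduct.rid k M) (lTensor M A.εR (C.ρR m))) ⊗ₜ (1 : H) := key3 A.εR _
        _ = m ⊗ₜ (1 : H) := by rw [hcR]
        _ = lTensor M A.S (m ⊗ₜ (1 : H)) := by rw [lTensor_tmul, hS1]
    refine (LinearEquiv.lTensor M (LinearEquiv.ofBijective A.S A.S_bij)).injective ?_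
    show lTensor M A.S (C.ρR m) = lTensor M A.S (m ⊗ₜ (1 : H))
    exact hmain


end
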